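/- Let n ≥ 2, μ ∈ ℂ and set ρ = n/2. For u ∈ C^∞(ℝⁿ, ℂ) define the operators E u = Σ_{k=1}^n x_k ∂u/∂x_k, H u = E u + (μ+ρ) u, M_{jk} u = x_j ∂u/∂x_k − x_k ∂u/∂x_j, X̄_j u = −∂u/∂x_j, and X_j u = −|x|² ∂u/∂x_j + 2 x_j (E u + (μ+ρ) u). Then for every u ∈ C^∞(ℝⁿ, ℂ) and every x ∈ ℝⁿ: H(H u) − (n−1) H u − Σ_{1≤j<k≤n−1} M_{jk}(M_{jk} u) + Σ_{j=1}^{n−1} X_j(X̄_j u) = x_n² Δu + 2(μ+1) x_n ∂u/∂x_n + (μ+ρ)(μ−ρ+1) u, where Δ is the Euclidean Laplacian. (This is the explicit form of the Casimir operator of O(1,n) acting in the principal series representation π_μ of O(1,n+1) realized on functions on ℝⁿ.) -/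

import Mathlib

/-- Partial derivative in the `i`-th coordinate direction. -/
noncomputable def pdC {n : ℕ} (i : Fin n) (u : (Fin n → ℝ) → ℂ) (x : Fin n → ℝ) : ℂ :=
  fderiv ℝ u x (Pi.single i 1)

/-- The Euler operator `E u = Σ_k x_k ∂u/∂x_k`. -/
noncomputable def opE {n : ℕ} (u : (Fin n → ℝ) → ℂ) (x : Fin n → ℝ) : ℂ :=
  ∑ k, (x k : ℂ) * pdC k u x

/-- The operator `H u = E u + (μ+ρ) u` where `ρ = n/2`. -/
noncomputable def opH (n : ℕ) (μ : ℂ) (u : (Fin n → ℝ) → ℂ) (x : Fin n → ℝ) : ℂ :=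
  opE u x + (μ + (n : ℂ) / 2) * u x

/-- The rotation operator `M_{jk} u = x_j ∂u/∂x_k − x_k ∂u/∂x_j`. -/
noncomputable def opM {n : ℕ} (j k : Fin n) (u : (Fin n → ℝ) → ℂ) (x : Fin n → ℝ) : ℂ :=
  (x j : ℂ) * pdC k u x - (x k : ℂ) * pdC j u x

/-- `X̄_j u = −∂u/∂x_j`. -/
noncomputable def opXbar {n : ℕ} (j : Fin n) (u : (Fin n → ℝ) → ℂ) (x : Fin n → ℝ) : ℂ :=
  -pdC j u x

/-- `X_j u = −|x|² ∂u/∂x_j + 2 x_j (E u + (μ+ρ) u)` where `ρ = n/2`. -/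
noncomputable def opX (n : ℕ) (μ : ℂ) (j : Fin n) (u : (Fin n → ℝ) → ℂ)
    (x : Fin n → ℝ) : ℂ :=
  -((∑ k, x k ^ 2 : ℝ) : ℂ) * pdC j u x + 2 * (x j : ℂ) * (opE u x + (μ + (n : ℂ) / 2) * u x)

section pdlemmas
variable {n : ℕ} {u v w : (Fin n → ℝ) → ℂ} {x : Fin n → ℝ} {i j : Fin n}

lemma pdC_contDiff (hu : ContDiff ℝ (⊤ : ℕ∞) u) (i : Fin n) : ContDiff ℝ (⊤ : ℕ∞) (pdC i u) := by
  have h : ContDiff ℝ (⊤ : ℕ∞) (fderiv ℝ u) := hu.fderiv_right (by simp)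
  exact ((ContinuousLinearMap.apply ℝ ℂ ((Pi.single i 1 : Fin n → ℝ))).contDiff.comp h)

lemma pdC_add (hv : DifferentiableAt ℝ v x) (hw : DifferentiableAt ℝ w x) :
    pdC i (fun y => v y + w y) x = pdC i v x + pdC i w x := by
  simp [pdC, fderiv_fun_add hv hw]

lemma pdC_sub (hv : DifferentiableAt ℝ v x) (hw : DifferentiableAt ℝ w x) :
    pdC i (fun y => v y - w y) x = pdC i v x - pdC i w x := by
  simp [pdC, fderiv_fun_sub hv hw]

lemma pdC_neg : pdC i (fun y => -v y) x = -pdC i v x := by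
  simp [pdC, fderiv_neg]

lemma pdC_const_mul (c : ℂ) (hv : DifferentiableAt ℝ v x) :
    pdC i (fun y => c * v y) x = c * pdC i v x := by
  simp [pdC, fderiv_const_mul hv c]

lemma pdC_sum {ι : Type*} (s : Finset ι) (F : ι → (Fin n → ℝ) → ℂ)
    (hF : ∀ k ∈ s, DifferentiableAt ℝ (F k) x) :
    pdC i (fun y => ∑ k ∈ s, F k y) x = ∑ k ∈ s, pdC i (F k) x := by
  simp [pdC, fderiv_fun_sum hF]

lemma pdC_mul (hv : DifferentiableAt ℝ v x) (hw : DifferentiableAt ℝ w x) :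
    pdC i (fun y => v y * w y) x = pdC i v x * w x + v x * pdC i w x := by
  simp [pdC, fderiv_fun_mul hv hw]; ring

lemma hasFDerivAt_coord :
    HasFDerivAt (fun y : Fin n → ℝ => ((y j : ℝ) : ℂ))
      (Complex.ofRealCLM.comp (ContinuousLinearMap.proj j)) x :=
  Complex.ofRealCLM.hasFDerivAt.comp x (hasFDerivAt_apply j x)

lemma diffAt_coord : DifferentiableAt ℝ (fun y : Fin n → ℝ => ((y j : ℝ) : ℂ)) x :=
  hasFDerivAt_coord.differentiableAt

lemma pdC_coord : pdC i (fun y : Fin n → ℝ => ((y j : ℝ) : ℂ)) x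
    = if j = i then 1 else 0 := by
  rw [pdC, hasFDerivAt_coord.fderiv]
  simp [Pi.single_apply]
  split_ifs <;> simp

lemma pdC_comm (hu : ContDiff ℝ (⊤ : ℕ∞) u) (i j : Fin n)
    (x : Fin n → ℝ) : pdC i (pdC j u) x = pdC j (pdC i u) x := by
  have hd : DifferentiableAt ℝ (fderiv ℝ u) x :=
    ((hu.fderiv_right (m := (⊤ : ℕ∞)) (by simp)).differentiable (by simp)).differentiableAt
  have hkey : ∀ v : Fin n → ℝ, HasFDerivAt (fun y => fderiv ℝ u y v)
      ((ContinuousLinearMap.apply ℝ ℂ v).comp (fderiv ℝ (fderiv ℝ u) x)) x := fun v =>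
    ((ContinuousLinearMap.apply ℝ ℂ v).hasFDerivAt).comp x hd.hasFDerivAt
  have hs : IsSymmSndFDerivAt ℝ u x := hu.contDiffAt.isSymmSndFDerivAt (by rw [minSmoothness_of_isRCLikeNormedField]; exact WithTop.coe_le_coe.mpr le_top)
  show fderiv ℝ (fun y => fderiv ℝ u y (Pi.single j 1)) x (Pi.single i 1)
      = fderiv ℝ (fun y => fderiv ℝ u y (Pi.single i 1)) x (Pi.single j 1)
  rw [(hkey (Pi.single j 1)).fderiv, (hkey (Pi.single i 1)).fderiv]
  simpa using hs (Pi.single i 1) (Pi.single j 1)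

end pdlemmas

def gdef {n : ℕ} (x : Fin n → ℝ) (d : Fin n → ℂ) (D : Fin n → Fin n → ℂ) (j k : Fin n) : ℂ :=
  (x j : ℂ)^2 * D k k + (x k : ℂ)^2 * D j j - 2*(x j : ℂ)*((x k : ℂ)*D j k)
    - (x j : ℂ)*d j - (x k : ℂ)*d k

lemma key (n : ℕ) (hn : 2 ≤ n) (μ : ℂ) (x : Fin n → ℝ) (U : ℂ) (d : Fin n → ℂ)
    (D : Fin n → Fin n → ℂ) (hD : ∀ a b, D a b = D b a) :
    ((∑ k, (x k : ℂ) * (d k + ∑ l, (x l : ℂ) * D k l + (μ + (n:ℂ)/2) * d k))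
        + (μ + (n:ℂ)/2) * ((∑ k, (x k : ℂ) * d k) + (μ + (n:ℂ)/2) * U))
      - ((n : ℂ) - 1) * ((∑ k, (x k : ℂ) * d k) + (μ + (n:ℂ)/2) * U)
      - (∑ j : Fin n, ∑ k : Fin n, if j < k ∧ (k : ℕ) < n - 1 then gdef x d D j k else 0)
      + (∑ j : Fin n, if (j : ℕ) < n - 1 then
          (∑ k, (x k : ℂ)^2) * D j j
            + 2*(x j : ℂ)*((∑ l, (x l : ℂ) * (-(D j l))) + (μ + (n:ℂ)/2) * (-(d j))) else 0)
      = (x (⟨n-1, Nat.sub_lt (by omega) Nat.one_pos⟩ : Fin n) : ℂ)^2 * (∑ i, D i i)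
        + 2 * (μ+1) * (x (⟨n-1, Nat.sub_lt (by omega) Nat.one_pos⟩ : Fin n) : ℂ) * d ⟨n-1, Nat.sub_lt (by omega) Nat.one_pos⟩
        + (μ + (n:ℂ)/2) * (μ - (n:ℂ)/2 + 1) * U := by
  set ln : Fin n := ⟨n-1, Nat.sub_lt (by omega) Nat.one_pos⟩ with hln
  set S : Finset (Fin n) := Finset.univ.erase ln with hSdef
  have hmem : ∀ j : Fin n, ((j:ℕ) < n - 1) ↔ j ∈ S := by
    intro j
    have hj := j.isLt
    simp only [hSdef, Finset.mem_erase, Finset.mem_univ, and_true, ne_eq, Fin.ext_iff, hln]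
    omega
  have hsplit : ∀ f : Fin n → ℂ, (∑ k, f k) = (∑ k ∈ S, f k) + f ln := fun f =>
    (Finset.sum_erase_add _ _ (Finset.mem_univ ln)).symm
  have hcard : ((S.card : ℕ) : ℂ) = (n : ℂ) - 1 := by
    rw [hSdef, Finset.card_erase_of_mem (Finset.mem_univ ln), Finset.card_univ, Fintype.card_fin,
      Nat.cast_sub (by omega : 1 ≤ n), Nat.cast_one]
  have hfilter1 : ∀ f : Fin n → ℂ, (∑ j : Fin n, if (j:ℕ) < n - 1 then f j else 0) = ∑ j ∈ S, f j := by
    intro f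
    rw [← Finset.sum_filter]
    refine Finset.sum_congr ?_ fun _ _ => rfl
    ext j
    simp [Finset.mem_filter, ← hmem j]
  have hgsymm : ∀ j k : Fin n, gdef x d D k j = gdef x d D j k := by
    intro j k; simp only [gdef]; rw [hD k j]; ring
  have hpair : ∀ j k : Fin n,
      ((if j < k ∧ (k:ℕ) < n - 1 then gdef x d D j k else 0)
        + (if k < j ∧ (j:ℕ) < n - 1 then gdef x d D j k else 0))
      = (if ((j:ℕ) < n - 1 ∧ (k:ℕ) < n - 1) then gdef x d D j k else 0)
        - (if (j = k ∧ (j:ℕ) < n - 1) then gdef x d D j k else 0) := by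
    intro j k
    simp only [Fin.lt_def, Fin.ext_iff]
    split_ifs <;> first | ring1 | (exfalso; omega)
  have hAcomm : (∑ j : Fin n, ∑ k : Fin n, if j < k ∧ (k:ℕ) < n - 1 then gdef x d D j k else 0)
      = ∑ j : Fin n, ∑ k : Fin n, if k < j ∧ (j:ℕ) < n - 1 then gdef x d D j k else 0 := by
    rw [Finset.sum_comm]
    exact Finset.sum_congr rfl fun j _ => Finset.sum_congr rfl fun k _ =>
      if_congr Iff.rfl (hgsymm j k) rfl
  have hTflip : (∑ l ∈ S, (x l : ℂ) * D ln l) = ∑ l ∈ S, (x l : ℂ) * D l ln :=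
    Finset.sum_congr rfl fun l _ => by rw [hD ln l]
  have hAval : (∑ j : Fin n, ∑ k : Fin n, if j < k ∧ (k:ℕ) < n - 1 then gdef x d D j k else 0)
      = (∑ j ∈ S, (x j : ℂ)^2) * (∑ k ∈ S, D k k)
        - (∑ j ∈ S, (x j : ℂ) * ∑ k ∈ S, (x k : ℂ) * D j k)
        - ((n:ℂ) - 1) * (∑ j ∈ S, (x j : ℂ) * d j) + (∑ j ∈ S, (x j : ℂ) * d j) := by
    have hdouble : (∑ j : Fin n, ∑ k : Fin n, if j < k ∧ (k:ℕ) < n - 1 then gdef x d D j k else 0)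
          + (∑ j : Fin n, ∑ k : Fin n, if j < k ∧ (k:ℕ) < n - 1 then gdef x d D j k else 0)
        = (∑ j ∈ S, ∑ k ∈ S, gdef x d D j k) - (∑ j ∈ S, gdef x d D j j) := by
      nth_rewrite 2 [hAcomm]
      rw [← Finset.sum_add_distrib]
      calc (∑ j : Fin n, ((∑ k : Fin n, if j < k ∧ (k:ℕ) < n - 1 then gdef x d D j k else 0)
              + (∑ k : Fin n, if k < j ∧ (j:ℕ) < n - 1 then gdef x d D j k else 0)))
          = ∑ j : Fin n, ∑ k : Fin n,
              ((if ((j:ℕ) < n - 1 ∧ (k:ℕ) < n - 1) then gdef x d D j k else 0)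
                - (if (j = k ∧ (j:ℕ) < n - 1) then gdef x d D j k else 0)) := by
            refine Finset.sum_congr rfl fun j _ => ?_
            rw [← Finset.sum_add_distrib]
            exact Finset.sum_congr rfl fun k _ => hpair j k
        _ = (∑ j ∈ S, ∑ k ∈ S, gdef x d D j k) - (∑ j ∈ S, gdef x d D j j) := by
            simp only [Finset.sum_sub_distrib]
            congr 1
            · calc (∑ j : Fin n, ∑ k : Fin n,
                    if ((j:ℕ) < n - 1 ∧ (k:ℕ) < n - 1) then gdef x d D j k else 0)
                  = ∑ j : Fin n, (if (j:ℕ) < n - 1 then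
                      (∑ k : Fin n, if (k:ℕ) < n - 1 then gdef x d D j k else 0) else 0) := by
                    refine Finset.sum_congr rfl fun j _ => ?_
                    split_ifs with h
                    · exact Finset.sum_congr rfl fun k _ => by simp [h]
                    · exact Finset.sum_eq_zero fun k _ => if_neg (by tauto)
                _ = ∑ j ∈ S, ∑ k ∈ S, gdef x d D j k := by
                    rw [hfilter1]
                    exact Finset.sum_congr rfl fun j _ => hfilter1 _
            · calc (∑ j : Fin n, ∑ k : Fin n,
                    if (j = k ∧ (j:ℕ) < n - 1) then gdef x d D j k else 0)
                  = ∑ j : Fin n, (if (j:ℕ) < n - 1 then gdef x d D j j else 0) := by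
                    refine Finset.sum_congr rfl fun j _ => ?_
                    calc (∑ k : Fin n, if (j = k ∧ (j:ℕ) < n - 1) then gdef x d D j k else 0)
                        = ∑ k : Fin n, (if j = k then
                            (if (j:ℕ) < n - 1 then gdef x d D j k else 0) else 0) :=
                          Finset.sum_congr rfl fun k _ => by rw [ite_and]
                      _ = _ := by simp [Finset.sum_ite_eq]
                _ = ∑ j ∈ S, gdef x d D j j := hfilter1 _
    have hgsum : (∑ j ∈ S, ∑ k ∈ S, gdef x d D j k)
        = 2*((∑ j ∈ S, (x j : ℂ)^2) * (∑ k ∈ S, D k k))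
          - 2*(∑ j ∈ S, (x j : ℂ) * ∑ k ∈ S, (x k : ℂ) * D j k)
          - 2*(((S.card : ℕ):ℂ) * (∑ j ∈ S, (x j : ℂ) * d j)) := by
      have inner : ∀ j ∈ S, (∑ k ∈ S, gdef x d D j k)
          = (x j : ℂ)^2 * (∑ k ∈ S, D k k) + (∑ k ∈ S, (x k : ℂ)^2) * D j j
            - 2*((x j : ℂ) * (∑ k ∈ S, (x k : ℂ) * D j k))
            - ((S.card : ℕ):ℂ) * ((x j : ℂ) * d j) - (∑ k ∈ S, (x k : ℂ) * d k) := by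
        intro j _
        calc (∑ k ∈ S, gdef x d D j k)
            = ∑ k ∈ S, ((x j : ℂ)^2 * D k k + ((x k : ℂ)^2) * D j j
                - (2*(x j : ℂ)) * ((x k : ℂ) * D j k) - ((x j : ℂ) * d j) - (x k : ℂ) * d k) :=
              Finset.sum_congr rfl fun k _ => by simp only [gdef]
          _ = _ := by
              simp only [Finset.sum_sub_distrib, Finset.sum_add_distrib, ← Finset.mul_sum,
                ← Finset.sum_mul, Finset.sum_const, nsmul_eq_mul]
              ring
      calc (∑ j ∈ S, ∑ k ∈ S, gdef x d D j k)
          = ∑ j ∈ S, ((x j : ℂ)^2 * (∑ k ∈ S, D k k) + (∑ k ∈ S, (x k : ℂ)^2) * D j j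
            - 2*((x j : ℂ) * (∑ k ∈ S, (x k : ℂ) * D j k))
            - ((S.card : ℕ):ℂ) * ((x j : ℂ) * d j) - (∑ k ∈ S, (x k : ℂ) * d k)) :=
            Finset.sum_congr rfl inner
        _ = _ := by
            simp only [Finset.sum_sub_distrib, Finset.sum_add_distrib, ← Finset.mul_sum,
              ← Finset.sum_mul, Finset.sum_const, nsmul_eq_mul]
            ring
    have hdiag : (∑ j ∈ S, gdef x d D j j) = -(2*(∑ j ∈ S, (x j : ℂ) * d j)) := by
      calc (∑ j ∈ S, gdef x d D j j)
          = ∑ j ∈ S, (-(2*((x j : ℂ) * d j))) :=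
            Finset.sum_congr rfl fun j _ => by simp only [gdef]; ring
        _ = _ := by simp only [Finset.sum_neg_distrib, ← Finset.mul_sum]
    rw [hgsum, hdiag, hcard] at hdouble
    linear_combination hdouble / 2
  -- expansions of the remaining composite sums
  have hT1 : (∑ k, (x k : ℂ) * (d k + ∑ l, (x l : ℂ) * D k l + (μ + (n:ℂ)/2) * d k))
      = ((∑ k ∈ S, (x k : ℂ) * d k) + (x ln : ℂ) * d ln)
        + ((∑ j ∈ S, (x j : ℂ) * ∑ k ∈ S, (x k : ℂ) * D j k)
            + 2*((x ln : ℂ) * (∑ l ∈ S, (x l : ℂ) * D l ln)) + (x ln : ℂ)^2 * D ln ln)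
        + (μ + (n:ℂ)/2) * ((∑ k ∈ S, (x k : ℂ) * d k) + (x ln : ℂ) * d ln) := by
    have h1 : ∀ k : Fin n, (∑ l, (x l : ℂ) * D k l)
        = (∑ l ∈ S, (x l : ℂ) * D k l) + (x ln : ℂ) * D k ln := fun k => hsplit _
    calc (∑ k, (x k : ℂ) * (d k + ∑ l, (x l : ℂ) * D k l + (μ + (n:ℂ)/2) * d k))
        = ∑ k, ((x k : ℂ) * d k + ((x k : ℂ) * (∑ l ∈ S, (x l : ℂ) * D k l)
            + (x ln : ℂ) * ((x k : ℂ) * D k ln)) + (μ + (n:ℂ)/2) * ((x k : ℂ) * d k)) :=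
          Finset.sum_congr rfl fun k _ => by rw [h1 k]; ring
      _ = (∑ k, (x k : ℂ) * d k) + ((∑ k, (x k : ℂ) * (∑ l ∈ S, (x l : ℂ) * D k l))
            + (x ln : ℂ) * (∑ k, (x k : ℂ) * D k ln))
            + (μ + (n:ℂ)/2) * (∑ k, (x k : ℂ) * d k) := by
          simp only [Finset.sum_add_distrib, ← Finset.mul_sum]
      _ = _ := by
          rw [hsplit (fun k => (x k : ℂ) * d k),
            hsplit (fun k => (x k : ℂ) * (∑ l ∈ S, (x l : ℂ) * D k l)),
            hsplit (fun k => (x k : ℂ) * D k ln), hTflip]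
          ring
  have hT4 : (∑ j ∈ S, ((∑ k, (x k : ℂ)^2) * D j j
        + 2*(x j : ℂ)*((∑ l, (x l : ℂ) * (-(D j l))) + (μ + (n:ℂ)/2) * (-(d j)))))
      = ((∑ k ∈ S, (x k : ℂ)^2) + (x ln : ℂ)^2) * (∑ j ∈ S, D j j)
        - 2*(∑ j ∈ S, (x j : ℂ) * ∑ k ∈ S, (x k : ℂ) * D j k)
        - 2*((x ln : ℂ) * (∑ l ∈ S, (x l : ℂ) * D l ln))
        - 2*((μ + (n:ℂ)/2) * (∑ j ∈ S, (x j : ℂ) * d j)) := by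
    have h2 : ∀ j : Fin n, (∑ l, (x l : ℂ) * (-(D j l)))
        = -((∑ l ∈ S, (x l : ℂ) * D j l) + (x ln : ℂ) * D j ln) := by
      intro j
      calc (∑ l, (x l : ℂ) * (-(D j l))) = ∑ l, (-((x l : ℂ) * D j l)) :=
            Finset.sum_congr rfl fun l _ => by ring
        _ = -(∑ l, (x l : ℂ) * D j l) := Finset.sum_neg_distrib _
        _ = _ := by rw [hsplit (fun l => (x l : ℂ) * D j l)]
    calc (∑ j ∈ S, ((∑ k, (x k : ℂ)^2) * D j j
          + 2*(x j : ℂ)*((∑ l, (x l : ℂ) * (-(D j l))) + (μ + (n:ℂ)/2) * (-(d j)))))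
        = ∑ j ∈ S, (((∑ k ∈ S, (x k : ℂ)^2) + (x ln : ℂ)^2) * D j j
            - 2*((x j : ℂ) * (∑ l ∈ S, (x l : ℂ) * D j l))
            - (2*(x ln : ℂ)) * ((x j : ℂ) * D j ln)
            - (2*(μ + (n:ℂ)/2)) * ((x j : ℂ) * d j)) := by
          refine Finset.sum_congr rfl fun j _ => ?_
          rw [h2 j, hsplit (fun k => (x k : ℂ)^2)]
          ring
      _ = _ := by
          simp only [Finset.sum_sub_distrib, ← Finset.mul_sum, ← Finset.sum_mul]
          ring
  rw [hAval, hfilter1, hT1, hT4, hsplit (fun k => (x k : ℂ) * d k), hsplit (fun i => D i i)]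
  ring


/-- The Casimir operator identity: for every smooth `u : ℝⁿ → ℂ` and `x ∈ ℝⁿ`,
`H² u − (n−1) H u − Σ_{1≤j<k≤n−1} M_{jk}² u + Σ_{j=1}^{n−1} X_j X̄_j u
  = x_n² Δu + 2(μ+1) x_n ∂u/∂x_n + (μ+ρ)(μ−ρ+1) u` with `ρ = n/2`. -/
theorem statement11 (n : ℕ) (hn : 2 ≤ n) (μ : ℂ) (u : (Fin n → ℝ) → ℂ)
    (hu : ContDiff ℝ (⊤ : ℕ∞) u) :
    ∀ x : Fin n → ℝ,
      opH n μ (opH n μ u) x - ((n : ℂ) - 1) * opH n μ u x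
        - (∑ j : Fin n, ∑ k : Fin n,
            if j < k ∧ (k : ℕ) < n - 1 then opM j k (opM j k u) x else 0)
        + (∑ j : Fin n, if (j : ℕ) < n - 1 then opX n μ j (opXbar j u) x else 0)
      = ((x ⟨n - 1, by omega⟩ : ℝ) ^ 2 : ℝ) * (∑ i, pdC i (pdC i u) x)
          + 2 * (μ + 1) * (x ⟨n - 1, by omega⟩ : ℂ) * pdC ⟨n - 1, by omega⟩ u x
          + (μ + (n : ℂ) / 2) * (μ - (n : ℂ) / 2 + 1) * u x := by
  intro x
  have hud : Differentiable ℝ u := hu.differentiable (by simp)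
  have hpdd : ∀ i : Fin n, Differentiable ℝ (pdC i u) := fun i =>
    (pdC_contDiff hu i).differentiable (by simp)
  have hsym : ∀ a b : Fin n, pdC a (pdC b u) x = pdC b (pdC a u) x := fun a b =>
    pdC_comm hu a b x
  have hdiffE : DifferentiableAt ℝ (opE u) x := by
    show DifferentiableAt ℝ (fun y => ∑ l : Fin n, ((y l : ℝ) : ℂ) * pdC l u y) x
    exact DifferentiableAt.fun_sum fun l _ => diffAt_coord.mul ((hpdd l) x)
  have hpdE : ∀ i : Fin n, pdC i (opE u) x
      = pdC i u x + ∑ l, (x l : ℂ) * pdC i (pdC l u) x := by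
    intro i
    have h0 : pdC i (opE u) x = ∑ l, pdC i (fun y => ((y l : ℝ) : ℂ) * pdC l u y) x := by
      show pdC i (fun y => ∑ l : Fin n, ((y l : ℝ) : ℂ) * pdC l u y) x = _
      exact pdC_sum Finset.univ _ fun l _ => diffAt_coord.mul ((hpdd l) x)
    rw [h0]
    calc (∑ l, pdC i (fun y => ((y l : ℝ) : ℂ) * pdC l u y) x)
        = ∑ l, ((if l = i then (1:ℂ) else 0) * pdC l u x + (x l : ℂ) * pdC i (pdC l u) x) :=
          Finset.sum_congr rfl fun l _ => by
            rw [pdC_mul diffAt_coord ((hpdd l) x), pdC_coord]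
      _ = _ := by
          rw [Finset.sum_add_distrib]
          congr 1
          simp [ite_mul, Finset.sum_ite_eq']
  have hpdH : ∀ i : Fin n, pdC i (opH n μ u) x
      = pdC i u x + (∑ l, (x l : ℂ) * pdC i (pdC l u) x) + (μ + (n:ℂ)/2) * pdC i u x := by
    intro i
    have h0 : pdC i (opH n μ u) x
        = pdC i (opE u) x + pdC i (fun y => (μ + (n:ℂ)/2) * u y) x := by
      show pdC i (fun y => opE u y + (μ + (n:ℂ)/2) * u y) x = _
      exact pdC_add hdiffE ((hud x).const_mul _)
    rw [h0, hpdE, pdC_const_mul _ (hud x)]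
  have hHx : opH n μ u x = (∑ k, (x k : ℂ) * pdC k u x) + (μ + (n:ℂ)/2) * u x := rfl
  have hHH : opH n μ (opH n μ u) x
      = (∑ k, (x k : ℂ) * (pdC k u x + ∑ l, (x l : ℂ) * pdC k (pdC l u) x
            + (μ + (n:ℂ)/2) * pdC k u x))
        + (μ + (n:ℂ)/2) * ((∑ k, (x k : ℂ) * pdC k u x) + (μ + (n:ℂ)/2) * u x) := by
    show opE (opH n μ u) x + (μ + (n:ℂ)/2) * opH n μ u x = _
    rw [hHx]
    congr 1
    show (∑ k, (x k : ℂ) * pdC k (opH n μ u) x) = _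
    exact Finset.sum_congr rfl fun k _ => by rw [hpdH k]
  have hMM : ∀ j k : Fin n, j < k → opM j k (opM j k u) x
      = gdef x (fun i => pdC i u x) (fun a b => pdC a (pdC b u) x) j k := by
    intro j k hjk
    have hne : j ≠ k := ne_of_lt hjk
    have hpdMi : ∀ i : Fin n, pdC i (opM j k u) x
        = ((if j = i then (1:ℂ) else 0) * pdC k u x + (x j : ℂ) * pdC i (pdC k u) x)
          - ((if k = i then (1:ℂ) else 0) * pdC j u x + (x k : ℂ) * pdC i (pdC j u) x) := by
      intro i
      have h0 : pdC i (opM j k u) x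
          = pdC i (fun y => ((y j : ℝ) : ℂ) * pdC k u y) x
            - pdC i (fun y => ((y k : ℝ) : ℂ) * pdC j u y) x := by
        show pdC i (fun y => ((y j : ℝ) : ℂ) * pdC k u y - ((y k : ℝ) : ℂ) * pdC j u y) x = _
        exact pdC_sub (diffAt_coord.mul ((hpdd k) x)) (diffAt_coord.mul ((hpdd j) x))
      rw [h0, pdC_mul diffAt_coord ((hpdd k) x), pdC_mul diffAt_coord ((hpdd j) x),
        pdC_coord, pdC_coord]
    show (x j : ℂ) * pdC k (opM j k u) x - (x k : ℂ) * pdC j (opM j k u) x = _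
    rw [hpdMi k, hpdMi j, hsym k j]
    simp only [if_neg hne, if_neg (Ne.symm hne), gdef]
    simp only [ite_true, eq_self_iff_true, if_true]
    ring
  have hXX : ∀ j : Fin n, opX n μ j (opXbar j u) x
      = (∑ k, (x k : ℂ)^2) * pdC j (pdC j u) x
        + 2*(x j : ℂ)*((∑ l, (x l : ℂ) * (-(pdC j (pdC l u) x)))
            + (μ + (n:ℂ)/2) * (-(pdC j u x))) := by
    intro j
    have hXbar : ∀ i : Fin n, pdC i (opXbar j u) x = -(pdC i (pdC j u) x) := by
      intro i
      show pdC i (fun y => -(pdC j u y)) x = _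
      exact pdC_neg
    show -((∑ k, x k ^ 2 : ℝ) : ℂ) * pdC j (opXbar j u) x
        + 2 * (x j : ℂ) * (opE (opXbar j u) x + (μ + (n:ℂ)/2) * opXbar j u x) = _
    have hE : opE (opXbar j u) x = ∑ l, (x l : ℂ) * (-(pdC j (pdC l u) x)) := by
      show (∑ l, (x l : ℂ) * pdC l (opXbar j u) x) = _
      exact Finset.sum_congr rfl fun l _ => by rw [hXbar l, hsym l j]
    have hXb : opXbar j u x = -(pdC j u x) := rfl
    rw [hXbar j, hE, hXb]
    push_cast
    ring
  have hMsum : (∑ j : Fin n, ∑ k : Fin n,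
        if j < k ∧ (k : ℕ) < n - 1 then opM j k (opM j k u) x else 0)
      = ∑ j : Fin n, ∑ k : Fin n, if j < k ∧ (k : ℕ) < n - 1 then
          gdef x (fun i => pdC i u x) (fun a b => pdC a (pdC b u) x) j k else 0 :=
    Finset.sum_congr rfl fun j _ => Finset.sum_congr rfl fun k _ => by
      split_ifs with h
      · exact hMM j k h.1
      · rfl
  have hXsum : (∑ j : Fin n, if (j : ℕ) < n - 1 then opX n μ j (opXbar j u) x else 0)
      = ∑ j : Fin n, if (j : ℕ) < n - 1 then
          (∑ k, (x k : ℂ)^2) * pdC j (pdC j u) x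
            + 2*(x j : ℂ)*((∑ l, (x l : ℂ) * (-(pdC j (pdC l u) x)))
                + (μ + (n:ℂ)/2) * (-(pdC j u x))) else 0 :=
    Finset.sum_congr rfl fun j _ => by
      split_ifs with h
      · exact hXX j
      · rfl
  have hcast : ((x (⟨n - 1, by omega⟩ : Fin n) ^ 2 : ℝ) : ℂ)
      = ((x (⟨n - 1, by omega⟩ : Fin n) : ℝ) : ℂ)^2 := by push_cast; ring
  rw [hHH, hHx, hMsum, hXsum, hcast]
  exact key n hn μ x (u x) (fun i => pdC i u x) (fun a b => pdC a (pdC b u) x) hsym
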